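/- Let G be a bi-valued symmetric multigraph with weights α > β ≥ 0 and let π' be a partial envy-free orientation of G that orients no edge between distinct vertices i and j, and suppose u_i(π'_i) ≥ α. Then there exists an envy-free extension π of π' in which all edges between i and j and all self-loops at i and j are oriented. -/

import Mathlib

/-- Bundle of an agent under a partial orientation. -/
def bundleP {V E : Type*} [Fintype E] [DecidableEq V] [DecidableEq E]
    (π : E → Option V) (i : V) : Finset E :=
  Finset.univ.filter (fun e => π e = some i)

/-- Additive utility: an agent values an edge at its weight iff incident. -/
def util {V E : Type*} [DecidableEq V] (ends : E → V × V) (w : E → ℝ)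
    (i : V) (S : Finset E) : ℝ :=
  ∑ e ∈ S, if (ends e).1 = i ∨ (ends e).2 = i then w e else 0

/-- The set of (non-loop) edges between two distinct vertices. -/
def edgesBetween {V E : Type*} [Fintype E] [DecidableEq V] [DecidableEq E]
    (ends : E → V × V) (i j : V) : Finset E :=
  Finset.univ.filter (fun e => ends e = (i, j) ∨ ends e = (j, i))

/-!
Split the edges between `i` and `j` into a part `T` for `i` and the rest for `j` so that
`w T ≤ w (rest) ≤ w T + α`, and give every still unoriented loop to its vertex. Because `π'`
orients no `i`–`j` edge, `i` values nothing in `j`'s old bundle and vice versa. Hence `j` values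
`i`'s new bundle at `w T ≤ w (rest)`, which `j` gains, and `i` values `j`'s new bundle at
`w (rest) ≤ w T + α`, which `i` holds since `α ≤ u_i(π'_i)`. No other agent is incident to a
newly oriented edge, so no other envy can arise.
-/

open Finset

theorem Finset.exists_subset_sum_le_sum_sdiff_le_sum_add {ι 𝕜 : Type*} [DecidableEq ι]
    [Field 𝕜] [LinearOrder 𝕜] [IsStrictOrderedRing 𝕜] (S : Finset ι) {w : ι → 𝕜} {c : 𝕜}
    (hc : 0 ≤ c) (hw0 : ∀ i, 0 ≤ w i) (hwc : ∀ i, w i ≤ c) :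
    ∃ T ⊆ S, ∑ i ∈ T, w i ≤ ∑ i ∈ S \ T, w i ∧ ∑ i ∈ S \ T, w i ≤ ∑ i ∈ T, w i + c := by
  -- By induction on `S`: the new element joins `T` or, if that overshoots, `T` and `S \ T` swap.
  suffices ∃ T ⊆ S, 2 * ∑ i ∈ T, w i ≤ ∑ i ∈ S, w i ∧ ∑ i ∈ S, w i ≤ 2 * ∑ i ∈ T, w i + c by
    obtain ⟨T, hTS, h₁, h₂⟩ := this
    refine ⟨T, hTS, ?_, ?_⟩ <;> rw [sum_sdiff_eq_sub hTS] <;> linarith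
  induction S using Finset.induction_on with
  | empty => exact ⟨∅, Subset.rfl, by simp, by simpa using hc⟩
  | insert e S he ih =>
    obtain ⟨T, hTS, h₁, h₂⟩ := ih
    rw [sum_insert he]
    by_cases h : 2 * (w e + ∑ i ∈ T, w i) ≤ w e + ∑ i ∈ S, w i
    · refine ⟨insert e T, insert_subset_insert e hTS, ?_, ?_⟩ <;>
        rw [sum_insert fun heT => he (hTS heT)] <;> linarith [hw0 e]
    · refine ⟨S \ T, sdiff_subset.trans (subset_insert e S), ?_, ?_⟩ <;>
        rw [sum_sdiff_eq_sub hTS] <;> linarith [hwc e]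

section Orientation

variable {V E : Type*} {ends : E → V × V}

def IsOrientation (ends : E → V × V) (π : E → Option V) : Prop :=
  ∀ e v, π e = some v → v = (ends e).1 ∨ v = (ends e).2

theorem IsOrientation.or {π σ : E → Option V} (hπ : IsOrientation ends π)
    (hσ : IsOrientation ends σ) : IsOrientation ends fun e => (π e).or (σ e) := by
  intro e v h
  cases hπe : π e with
  | none => exact hσ e v (by simpa [hπe] using h)
  | some u => exact hπ e v (by simpa [hπe] using h)

variable [DecidableEq V]

theorem util_eq_sum_filter (w : E → ℝ) (a : V) (S : Finset E) :
    util ends w a S = ∑ e ∈ S.filter (fun e => (ends e).1 = a ∨ (ends e).2 = a), w e :=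
  (sum_filter _ _).symm

variable {w : E → ℝ}

theorem util_nonneg (hw : ∀ e, 0 ≤ w e) (a : V) (S : Finset E) : 0 ≤ util ends w a S :=
  sum_nonneg fun e _ => by split_ifs <;> simp [hw e]

theorem util_le_util_of_incident_mem (hw : ∀ e, 0 ≤ w e) {a : V} {S S' : Finset E}
    (h : ∀ e ∈ S, (ends e).1 = a ∨ (ends e).2 = a → e ∈ S') :
    util ends w a S ≤ util ends w a S' := by
  rw [util_eq_sum_filter, util_eq_sum_filter]
  refine sum_le_sum_of_subset_of_nonneg ?_ fun e _ _ => hw e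
  intro e he
  simp only [mem_filter] at he ⊢
  exact ⟨h e he.1 he.2, he.2⟩

theorem util_eq_zero_of_not_incident {a : V} {S : Finset E}
    (h : ∀ e ∈ S, ¬((ends e).1 = a ∨ (ends e).2 = a)) : util ends w a S = 0 := by
  rw [util_eq_sum_filter, filter_false_of_mem h, sum_empty]

theorem util_eq_sum_of_incident {a : V} {S : Finset E}
    (h : ∀ e ∈ S, (ends e).1 = a ∨ (ends e).2 = a) : util ends w a S = ∑ e ∈ S, w e := by
  rw [util_eq_sum_filter, filter_true_of_mem h]

variable [Fintype E] [DecidableEq E]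

theorem edgesBetween_comm (ends : E → V × V) (i j : V) :
    edgesBetween ends i j = edgesBetween ends j i := by
  ext e
  simp [edgesBetween, or_comm]

theorem util_eq_sum_of_subset_edgesBetween {i j : V} {S : Finset E}
    (hS : S ⊆ edgesBetween ends i j) : util ends w i S = ∑ e ∈ S, w e := by
  refine util_eq_sum_of_incident fun e he => ?_
  have := hS he
  simp only [edgesBetween, mem_filter, mem_univ, true_and] at this
  rcases this with h | h <;> simp [h]

theorem util_bundleP_eq_zero {π : E → Option V} (hπ : IsOrientation ends π) {a b : V}
    (hab : a ≠ b) (hnone : ∀ e ∈ edgesBetween ends a b, π e = none) :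
    util ends w a (bundleP π b) = 0 := by
  refine util_eq_zero_of_not_incident fun e he hinc => ?_
  simp only [bundleP, mem_filter, mem_univ, true_and] at he
  have hmem : e ∈ edgesBetween ends a b := by
    simp only [edgesBetween, mem_filter, mem_univ, true_and, Prod.ext_iff]
    rcases hπ e b he with h | h <;> rcases hinc with h' | h' <;> grind
  simp [hnone e hmem] at he

/-- What `v` gains when `π` is extended by `σ` to `fun e => (π e).or (σ e)`. -/
def newEdges (π σ : E → Option V) (v : V) : Finset E :=
  (bundleP σ v).filter (fun e => π e = none)

@[simp]
theorem mem_newEdges {π σ : E → Option V} {v : V} {e : E} :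
    e ∈ newEdges π σ v ↔ σ e = some v ∧ π e = none := by
  simp [newEdges, bundleP]

theorem bundleP_or (π σ : E → Option V) (v : V) :
    bundleP (fun e => (π e).or (σ e)) v = bundleP π v ∪ newEdges π σ v := by
  ext e
  cases h : π e <;> simp [bundleP, newEdges, h]

theorem util_bundleP_or (π σ : E → Option V) (a v : V) :
    util ends w a (bundleP (fun e => (π e).or (σ e)) v) =
      util ends w a (bundleP π v) + util ends w a (newEdges π σ v) := by
  rw [bundleP_or, util, sum_union]
  · rfl
  · refine disjoint_left.mpr fun e he he' => ?_
    simp only [bundleP, mem_filter, mem_univ, true_and] at he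
    simp [he] at he'

theorem ne_loop_of_mem_edgesBetween {i j : V} (hij : i ≠ j) {e : E}
    (he : e ∈ edgesBetween ends i j) (v : V) : ends e ≠ (v, v) := by
  simp only [edgesBetween, mem_filter, mem_univ, true_and] at he
  rcases he with h | h <;> rw [h] <;> grind

def splitOrientation (ends : E → V × V) (i j : V) (T : Finset E) (e : E) : Option V :=
  if e ∈ T ∨ ends e = (i, i) then some i
  else if e ∈ edgesBetween ends i j ∨ ends e = (j, j) then some j
  else none

section splitOrientation

variable {i j : V} {T : Finset E} {e : E}

theorem splitOrientation_of_mem (he : e ∈ T) : splitOrientation ends i j T e = some i := by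
  simp [splitOrientation, he]

theorem splitOrientation_of_mem_sdiff (hij : i ≠ j) (he : e ∈ edgesBetween ends i j \ T) :
    splitOrientation ends i j T e = some j := by
  obtain ⟨hSB, hT⟩ := mem_sdiff.mp he
  simp [splitOrientation, hT, hSB, ne_loop_of_mem_edgesBetween hij hSB i]

theorem splitOrientation_ne_none
    (he : e ∈ edgesBetween ends i j ∨ ends e = (i, i) ∨ ends e = (j, j)) :
    splitOrientation ends i j T e ≠ none := by
  unfold splitOrientation
  split_ifs <;> simp_all

theorem mem_of_splitOrientation_eq_some_left (hij : i ≠ j)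
    (he : splitOrientation ends i j T e = some i) (hinc : (ends e).1 = j ∨ (ends e).2 = j) :
    e ∈ T := by
  unfold splitOrientation at he
  split_ifs at he with h₁ h₂ <;> grind

theorem mem_of_splitOrientation_eq_some_right (hij : i ≠ j)
    (he : splitOrientation ends i j T e = some j) (hinc : (ends e).1 = i ∨ (ends e).2 = i) :
    e ∈ edgesBetween ends i j \ T := by
  unfold splitOrientation at he
  split_ifs at he with h₁ h₂ <;> grind

theorem isOrientation_splitOrientation (hT : T ⊆ edgesBetween ends i j) :
    IsOrientation ends (splitOrientation ends i j T) := by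
  intro e v he
  unfold splitOrientation at he
  have := @hT e
  simp only [edgesBetween, mem_filter, mem_univ, true_and] at he this
  split_ifs at he <;> grind

theorem eq_or_eq_of_splitOrientation_eq_some (hT : T ⊆ edgesBetween ends i j) {a b : V}
    (he : splitOrientation ends i j T e = some b) (hinc : (ends e).1 = a ∨ (ends e).2 = a) :
    a = b ∨ a = i ∧ b = j ∨ a = j ∧ b = i := by
  unfold splitOrientation at he
  have := @hT e
  simp only [edgesBetween, mem_filter, mem_univ, true_and] at he this
  split_ifs at he <;> grind

variable {w : E → ℝ} {π : E → Option V}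

theorem util_newEdges_splitOrientation_fst_le (hw : ∀ e, 0 ≤ w e) (hij : i ≠ j)
    (hT : T ⊆ edgesBetween ends i j) :
    util ends w j (newEdges π (splitOrientation ends i j T) i) ≤ ∑ e ∈ T, w e := by
  rw [← util_eq_sum_of_subset_edgesBetween (hT.trans (edgesBetween_comm ends i j).subset)]
  exact util_le_util_of_incident_mem hw fun e he hinc =>
    mem_of_splitOrientation_eq_some_left hij (mem_newEdges.1 he).1 hinc

theorem util_newEdges_splitOrientation_snd_le (hw : ∀ e, 0 ≤ w e) (hij : i ≠ j) :
    util ends w i (newEdges π (splitOrientation ends i j T) j) ≤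
      ∑ e ∈ edgesBetween ends i j \ T, w e := by
  rw [← util_eq_sum_of_subset_edgesBetween sdiff_subset]
  exact util_le_util_of_incident_mem hw fun e he hinc =>
    mem_of_splitOrientation_eq_some_right hij (mem_newEdges.1 he).1 hinc

theorem util_newEdges_splitOrientation_eq_zero (hT : T ⊆ edgesBetween ends i j) {a b : V}
    (hab : a ≠ b) (hab_ij : ¬(a = i ∧ b = j)) (hab_ji : ¬(a = j ∧ b = i)) :
    util ends w a (newEdges π (splitOrientation ends i j T) b) = 0 :=
  util_eq_zero_of_not_incident fun e he hinc => by
    rcases eq_or_eq_of_splitOrientation_eq_some hT (mem_newEdges.1 he).1 hinc with h | h | h <;>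
      contradiction

variable (hnone : ∀ e ∈ edgesBetween ends i j, π e = none)
include hnone

theorem sum_le_util_newEdges_splitOrientation_fst (hw : ∀ e, 0 ≤ w e)
    (hT : T ⊆ edgesBetween ends i j) :
    ∑ e ∈ T, w e ≤ util ends w i (newEdges π (splitOrientation ends i j T) i) := by
  rw [← util_eq_sum_of_subset_edgesBetween hT]
  exact util_le_util_of_incident_mem hw fun e he _ =>
    mem_newEdges.2 ⟨splitOrientation_of_mem he, hnone e (hT he)⟩

theorem sum_sdiff_le_util_newEdges_splitOrientation_snd (hw : ∀ e, 0 ≤ w e) (hij : i ≠ j) :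
    ∑ e ∈ edgesBetween ends i j \ T, w e ≤
      util ends w j (newEdges π (splitOrientation ends i j T) j) := by
  rw [← util_eq_sum_of_subset_edgesBetween (sdiff_subset.trans (edgesBetween_comm ends i j).subset)]
  exact util_le_util_of_incident_mem hw fun e he _ =>
    mem_newEdges.2 ⟨splitOrientation_of_mem_sdiff hij he, hnone e (mem_sdiff.1 he).1⟩

end splitOrientation

def EnvyFree (ends : E → V × V) (w : E → ℝ) (π : E → Option V) : Prop :=
  ∀ a b, util ends w a (bundleP π b) ≤ util ends w a (bundleP π a)

theorem EnvyFree.or_splitOrientation (hw : ∀ e, 0 ≤ w e) {π : E → Option V}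
    (hπ : IsOrientation ends π) (hEF : EnvyFree ends w π) {i j : V} (hij : i ≠ j)
    (hnone : ∀ e ∈ edgesBetween ends i j, π e = none) {T : Finset E}
    (hT : T ⊆ edgesBetween ends i j)
    (hTj : ∑ e ∈ T, w e ≤ ∑ e ∈ edgesBetween ends i j \ T, w e)
    (hTi : ∑ e ∈ edgesBetween ends i j \ T, w e ≤ ∑ e ∈ T, w e + util ends w i (bundleP π i)) :
    EnvyFree ends w fun e => (π e).or (splitOrientation ends i j T e) := by
  intro a b
  rw [util_bundleP_or, util_bundleP_or]
  obtain rfl | hab := eq_or_ne a b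
  · exact le_rfl
  by_cases hab_ji : a = j ∧ b = i
  · obtain ⟨rfl, rfl⟩ := hab_ji
    rw [util_bundleP_eq_zero hπ hab (edgesBetween_comm ends b a ▸ hnone), zero_add]
    linarith [util_newEdges_splitOrientation_fst_le (π := π) hw hij hT,
      sum_sdiff_le_util_newEdges_splitOrientation_snd (T := T) hnone hw hij,
      util_nonneg (ends := ends) hw a (bundleP π a)]
  by_cases hab_ij : a = i ∧ b = j
  · obtain ⟨rfl, rfl⟩ := hab_ij
    rw [util_bundleP_eq_zero hπ hab hnone, zero_add]
    linarith [util_newEdges_splitOrientation_snd_le (ends := ends) (π := π) (T := T) hw hij,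
      sum_le_util_newEdges_splitOrientation_fst hnone hw hT]
  rw [util_newEdges_splitOrientation_eq_zero hT hab hab_ij hab_ji, add_zero]
  exact (hEF a b).trans (le_add_of_nonneg_right (util_nonneg hw _ _))

end Orientation

/-- extension lemma, second form. If a partial envy-free
orientation `π'` of a bi-valued symmetric multigraph orients no edge between
distinct vertices `i` and `j`, and `i` already receives utility at least `α`,
then `π'` extends to an envy-free partial orientation orienting all edges
between `i` and `j` and all self-loops at `i` and `j`. -/
theorem stmt10 {V E : Type*} [Fintype E] [DecidableEq V] [DecidableEq E]
    (ends : E → V × V) (heavy : E → Bool) (α β : ℝ) (hβ : 0 ≤ β) (hαβ : β < α)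
    (w : E → ℝ) (hw : ∀ e, w e = if heavy e then α else β)
    (π' : E → Option V)
    (horient : ∀ e v, π' e = some v → v = (ends e).1 ∨ v = (ends e).2)
    (hEF : ∀ i j : V, util ends w i (bundleP π' j) ≤ util ends w i (bundleP π' i))
    (i j : V) (hij : i ≠ j)
    (hnone : ∀ e ∈ edgesBetween ends i j, π' e = none)
    (hα : α ≤ util ends w i (bundleP π' i)) :
    ∃ π : E → Option V,
      (∀ e v, π e = some v → v = (ends e).1 ∨ v = (ends e).2) ∧
      (∀ e v, π' e = some v → π e = some v) ∧
      (∀ a b : V, util ends w a (bundleP π b) ≤ util ends w a (bundleP π a)) ∧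
      (∀ e ∈ edgesBetween ends i j, π e ≠ none) ∧
      (∀ e, ends e = (i, i) ∨ ends e = (j, j) → π e ≠ none) := by
  have hw0 (e : E) : 0 ≤ w e := by rw [hw]; split <;> linarith
  have hwα (e : E) : w e ≤ α := by rw [hw]; split <;> linarith
  obtain ⟨T, hT, hTj, hTi⟩ :=
    (edgesBetween ends i j).exists_subset_sum_le_sum_sdiff_le_sum_add (by linarith) hw0 hwα
  refine ⟨fun e => (π' e).or (splitOrientation ends i j T e),
    IsOrientation.or horient (isOrientation_splitOrientation hT), fun e v he => by simp [he],
    EnvyFree.or_splitOrientation hw0 horient hEF hij hnone hT hTj (by linarith),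
    fun e he h => splitOrientation_ne_none (Or.inl he) (Option.or_eq_none_iff.1 h).2,
    fun e he h => splitOrientation_ne_none (Or.inr he) (Option.or_eq_none_iff.1 h).2⟩
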